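/- arXiv:1212.2399 — 3 statements merged into one kernel-verified Lean document; each statement's English description precedes it below -/
import Mathlib

section
/- For the East model on Λ = {1,…,L} with q ∈ (0,1/2), the survival function of the hitting time τ_L started from 𝟙0 is sub-multiplicative: for all s,t ≥ 0, P_{𝟙0}(τ_L > t+s) ≤ P_{𝟙0}(τ_L > t)·P_{𝟙0}(τ_L > s). The same sub-multiplicativity holds for the hitting time τ̂_L of {σ : σ_L = 0} started from the all-ones configuration 𝟙: P_𝟙(τ̂_L > t+s) ≤ P_𝟙(τ̂_L > t)·P_𝟙(τ̂_L > s). -/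
open Filter Topology MeasureTheory

namespace East

/-- Configurations of the East model on `Λ = {1,…,L}`: `true` = particle (1),
`false` = vacancy (0).  The index `x : Fin L` corresponds to the site `x.val + 1`. -/
abbrev Cfg (L : ℕ) := Fin L → Bool

noncomputable section

/-- Weight of a configuration under the product Bernoulli(1−q) measure π. -/
def weight (L : ℕ) (q : ℝ) (σ : Cfg L) : ℝ :=
  ∏ x : Fin L, (if σ x then (1 - q) else q)

/-- Mean of `f` under π. -/
def mean (L : ℕ) (q : ℝ) (f : Cfg L → ℝ) : ℝ :=
  ∑ σ : Cfg L, weight L q σ * f σ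

/-- π-measure of a set of configurations. -/
def measSet (L : ℕ) (q : ℝ) (A : Set (Cfg L)) : ℝ :=
  ∑ σ : Cfg L, Set.indicator A (weight L q) σ

/-- The East constraint at `x`, as a 0/1 real number: the leftmost site is unconstrained,
and any other site is free iff its left neighbour is a vacancy. -/
def cR (L : ℕ) (σ : Cfg L) (x : Fin L) : ℝ :=
  if x.val = 0 then 1
  else if σ ⟨x.val - 1, lt_of_le_of_lt (Nat.sub_le _ _) x.isLt⟩ = false then 1 else 0

/-- The East constraint at `x`, as a proposition. -/
def constraintP (L : ℕ) (σ : Cfg L) (x : Fin L) : Prop :=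
  x.val = 0 ∨ σ ⟨x.val - 1, lt_of_le_of_lt (Nat.sub_le _ _) x.isLt⟩ = false

/-- Flip the spin at `x`. -/
def flip (L : ℕ) (σ : Cfg L) (x : Fin L) : Cfg L :=
  Function.update σ x (!(σ x))

/-- Local mean `π_x f`. -/
def locMean (L : ℕ) (q : ℝ) (f : Cfg L → ℝ) (σ : Cfg L) (x : Fin L) : ℝ :=
  (1 - q) * f (Function.update σ x true) + q * f (Function.update σ x false)

/-- The East generator `𝓛 f (σ) = Σ_x c_x(σ) (π_x f (σ) − f σ)`. -/
def gen (L : ℕ) (q : ℝ) (f : Cfg L → ℝ) (σ : Cfg L) : ℝ :=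
  ∑ x : Fin L, cR L σ x * (locMean L q f σ x - f σ)

/-- Dirichlet form `𝓓(f) = π(f ⬝ (−𝓛f))`. -/
def dirichlet (L : ℕ) (q : ℝ) (f : Cfg L → ℝ) : ℝ :=
  mean L q (fun σ => f σ * (-(gen L q f σ)))

/-- Variance under π. -/
def variance (L : ℕ) (q : ℝ) (f : Cfg L → ℝ) : ℝ :=
  mean L q (fun σ => f σ ^ 2) - (mean L q f) ^ 2

/-- Spectral gap: `inf {𝓓(f)/Var(f) : f non-constant}`. -/
def gap (L : ℕ) (q : ℝ) : ℝ :=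
  sInf {r : ℝ | ∃ f : Cfg L → ℝ, (¬ ∀ σ τ : Cfg L, f σ = f τ) ∧
    r = dirichlet L q f / variance L q f}

/-- Relaxation time `T_rel(L) = 1 / gap(L)`. -/
def Trel (L : ℕ) (q : ℝ) : ℝ := 1 / gap L q

/-- Jump rate of the move at `x` from `σ`: the constraint times `q` (killing a particle
costs `q`… i.e. a particle flips to a vacancy at rate `q`) or `p = 1−q`. -/
def rate (L : ℕ) (q : ℝ) (σ : Cfg L) (x : Fin L) : ℝ :=
  cR L σ x * (if σ x then q else (1 - q))

/-- The East Markov rate matrix `K`, with off-diagonal entries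
`K(σ,σ^x) = c_x(σ)(q·σ_x + p(1−σ_x))` and zero row sums. -/
def K (L : ℕ) (q : ℝ) : Matrix (Cfg L) (Cfg L) ℝ := fun σ η =>
  (∑ x : Fin L, if η = flip L σ x then rate L q σ x else 0)
    - (if η = σ then ∑ x : Fin L, rate L q σ x else 0)

/-- Time-`t` law of the East process started from `η`, evaluated on a set `E`:
`P_t(η,E) = Σ_{σ∈E} exp(tK)(η,σ)`. -/
def law (L : ℕ) (q t : ℝ) (η : Cfg L) (E : Set (Cfg L)) : ℝ :=
  ∑ σ : Cfg L, Set.indicator E (fun σ' => NormedSpace.exp (t • K L q) η σ') σ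

/-- Total variation distance of the time-`t` law started at `η` from π. -/
def tvDist (L : ℕ) (q t : ℝ) (η : Cfg L) : ℝ :=
  (1 / 2) * ∑ σ : Cfg L, |NormedSpace.exp (t • K L q) η σ - weight L q σ|

/-- Mixing time `T_mix(L) = inf {t ≥ 0 : max_η ‖P_t(η,·) − π‖_TV ≤ 1/4}`. -/
def Tmix (L : ℕ) (q : ℝ) : ℝ :=
  sInf {t : ℝ | 0 ≤ t ∧ ∀ η : Cfg L, tvDist L q t η ≤ 1 / 4}

/-- The sub-rate matrix of `K` indexed by the complement of the target set `B`. -/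
def Ksub (L : ℕ) (q : ℝ) (B : Set (Cfg L)) :
    Matrix {σ : Cfg L // σ ∉ B} {σ : Cfg L // σ ∉ B} ℝ :=
  fun a b => K L q a.1 b.1

/-- Survival function of the hitting time of `B` started from `η`:
`P_η(τ_B > t) = Σ_{σ∉B} exp(t K_{Bᶜ})(η,σ)`  (equal to `0` when `η ∈ B`). -/
def surv (L : ℕ) (q : ℝ) (B : Set (Cfg L)) (η : Cfg L) (t : ℝ) : ℝ :=
  letI : Fintype {σ : Cfg L // σ ∉ B} := Fintype.ofFinite _
  ∑ a : {σ : Cfg L // σ ∉ B}, ∑ b : {σ : Cfg L // σ ∉ B},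
    (if a.1 = η then NormedSpace.exp (t • Ksub L q B) a b else 0)

/-- Expected hitting time `E_η[τ_B] = ∫₀^∞ P_η(τ_B > t) dt`. -/
def expHit (L : ℕ) (q : ℝ) (B : Set (Cfg L)) (η : Cfg L) : ℝ :=
  ∫ t in Set.Ioi (0 : ℝ), surv L q B η t

/-- The set `{σ : σ_L = 1}` (particle at the last site). -/
def lastOneSet (L : ℕ) : Set (Cfg L) :=
  {σ | ∀ x : Fin L, x.val + 1 = L → σ x = true}

/-- The set `{σ : σ_L = 0}` (vacancy at the last site). -/
def lastZeroSet (L : ℕ) : Set (Cfg L) :=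
  {σ | ∀ x : Fin L, x.val + 1 = L → σ x = false}

/-- The configuration `𝟙0`: a single vacancy at the last site `L`. -/
def oneZero (L : ℕ) : Cfg L := fun x => decide (x.val + 1 ≠ L)

/-- The all-ones configuration `𝟙`. -/
def allOnes (L : ℕ) : Cfg L := fun _ => true

/-- Mean hitting time `T_hit(L) = E_{𝟙0}[τ_{η_L = 1}]`. -/
def Thit (L : ℕ) (q : ℝ) : ℝ := expHit L q (lastOneSet L) (oneZero L)

/-- `f ≍ h` : `0 < liminf_{q↓0} f(q)/h(q) ≤ limsup_{q↓0} f(q)/h(q) < ∞`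
(liminf/limsup taken in `[0,∞]`). -/
def Asymp (f h : ℝ → ℝ) : Prop :=
  0 < Filter.liminf (fun q => ENNReal.ofReal (f q / h q)) (𝓝[>] (0 : ℝ)) ∧
  Filter.limsup (fun q => ENNReal.ofReal (f q / h q)) (𝓝[>] (0 : ℝ)) < ⊤

/-- `f ≻ h` : there is `β > 0` with `liminf_{q↓0} q^β · f(q)/h(q) > 0`. -/
def SuccSep (f h : ℝ → ℝ) : Prop :=
  ∃ β : ℝ, 0 < β ∧
    0 < Filter.liminf (fun q => ENNReal.ofReal (q ^ β * (f q / h q))) (𝓝[>] (0 : ℝ))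

/-- Number of vacancies (zeros) in a configuration. -/
def zeros (L : ℕ) (σ : Cfg L) : ℕ :=
  (Finset.univ.filter (fun x : Fin L => σ x = false)).card

/-- One legal East move, with both endpoint configurations having at most `m` vacancies. -/
def stepZ (L m : ℕ) (σ σ' : Cfg L) : Prop :=
  (∃ x : Fin L, constraintP L σ x ∧ σ' = flip L σ x) ∧ zeros L σ ≤ m ∧ zeros L σ' ≤ m

/-- Configuration extended to sites `0,1,…`: site `0` carries the frozen vacancy. -/
def extCfg (L : ℕ) (η : Cfg L) : ℕ → Bool :=
  fun i => if h : 1 ≤ i ∧ i ≤ L then η ⟨i - 1, by omega⟩ else false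

/-- The gap at site `x`: distance to the nearest vacancy strictly to the left
(including the frozen vacancy at the origin). -/
def gapAt (L : ℕ) (η : Cfg L) (x : ℕ) : ℕ :=
  sInf {d : ℕ | 0 < d ∧ extCfg L η (x - d) = false}

/-- `φ_{d,x}`: remove the vacancy at site `x` if it is present with gap exactly `d`. -/
def phi (L : ℕ) (d x : ℕ) (η : Cfg L) : Cfg L :=
  fun i => if i.val + 1 = x ∧ η i = false ∧ gapAt L η (i.val + 1) = d then true else η i

/-- The deterministic dynamics: step `k+1` applies `φ_{α_{k+1}}`, where
`α_{k+1} = (k / L + 1, L − k % L)` enumerates `{1,…,L}²` in the order `≺`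
(gap sizes increasing; for a fixed gap size, sites from right to left). -/
def detDyn (L : ℕ) (η : Cfg L) : ℕ → Cfg L
  | 0 => η
  | k + 1 => phi L (k / L + 1) (L - k % L) (detDyn L η k)

/-- The set `A_*` of configurations driven to `𝟙0` by the deterministic dynamics. -/
def Astar (L : ℕ) : Set (Cfg L) :=
  {η | detDyn L η (L ^ 2) = oneZero L}

/-- The internal boundary `∂A_*` of `A_*`. -/
def boundaryAstar (L : ℕ) : Set (Cfg L) :=
  {σ | σ ∈ Astar L ∧ ∃ x : Fin L, constraintP L σ x ∧ flip L σ x ∉ Astar L}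

/-- Capacity between `a` and `B`, via the Dirichlet principle:
`C(a,B) = inf {𝓓(f) : f(a) = 1, f ≡ 0 on B}`. -/
def capacity (L : ℕ) (q : ℝ) (a : Cfg L) (B : Set (Cfg L)) : ℝ :=
  sInf {r : ℝ | ∃ f : Cfg L → ℝ, f a = 1 ∧ (∀ σ ∈ B, f σ = 0) ∧ r = dirichlet L q f}

end

end East

/-!
Let `P_t = exp (t • K_{Bᶜ})` be the killed semigroup, so that `P_η(τ_B > t) = (P_t 1)(η)`. Since
`K_{Bᶜ}` has nonnegative off-diagonal entries, `P_t` is entrywise nonnegative, and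
`(P_{t+s} 1)(η) = (P_t (P_s 1))(η) ≤ (P_t 1)(η) · max (P_s 1)`; so it suffices that `P_s 1` is
maximal at the starting configuration. For `B = {σ_L = b}` this follows from an invariant cone:
nonnegative functions, vanishing on `B`, that increase when the rightmost vacancy among the sites
`1, …, L-1` is filled. The uniformized generator `K + L • 1` is a sum over sites of convex
combinations `r v(σ^x) + (1 - r) v(σ)`, and comparing these site by site shows that it preserves
the cone; hence so does `P_t`. Filling interior vacancies from the right, every function in the
cone is maximal at the configuration that is `1` on `1, …, L-1` and `!b` at `L`: this is `𝟙0`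
for `τ_L` and `𝟙` for `τ̂_L`.
-/

namespace Matrix

variable {ι : Type*} [Fintype ι]

theorem mul_mulVec_apply_le {P Q : Matrix ι ι ℝ} (hP : ∀ i j, 0 ≤ P i j) {v : ι → ℝ} {i : ι}
    (hi : ∀ j, (Q *ᵥ v) j ≤ (Q *ᵥ v) i) : ((P * Q) *ᵥ v) i ≤ (P *ᵥ 1) i * (Q *ᵥ v) i := by
  rw [← mulVec_mulVec, mulVec, mulVec, dotProduct, dotProduct, Finset.sum_mul]
  exact Finset.sum_le_sum fun j _ => by
    rw [Pi.one_apply, mul_one]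
    exact mul_le_mul_of_nonneg_left (hi j) (hP i j)

variable [DecidableEq ι]

open scoped Norms.Operator in
theorem exp_smul_mulVec_mem {C : PointedCone ℝ (ι → ℝ)} (hC : IsClosed (C : Set (ι → ℝ)))
    {N : Matrix ι ι ℝ} (hN : ∀ v ∈ C, N *ᵥ v ∈ C) {t : ℝ} (ht : 0 ≤ t) {v : ι → ℝ}
    (hv : v ∈ C) : NormedSpace.exp (t • N) *ᵥ v ∈ C := by
  have hpow (n : ℕ) : (N ^ n) *ᵥ v ∈ C := by
    induction n with
    | zero => simpa using hv
    | succ n ih => simpa [pow_succ', ← mulVec_mulVec] using hN _ ih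
  have hterm (n : ℕ) : ((n.factorial⁻¹ : ℝ) • (t • N) ^ n) *ᵥ v ∈ C := by
    rw [smul_pow, smul_smul, smul_mulVec]
    exact C.smul_mem (by positivity) (hpow n)
  have hsum := (NormedSpace.exp_series_hasSum_exp' (𝕂 := ℝ) (t • N)).map
    (mulVec.addMonoidHomLeft v) (continuous_id.matrix_mulVec continuous_const)
  exact hC.mem_of_tendsto hsum.tendsto_sum_nat
    (Filter.Eventually.of_forall fun n => C.sum_mem fun k _ => hterm k)

open scoped Norms.Operator in
theorem exp_smul_one (r : ℝ) : NormedSpace.exp (r • (1 : Matrix ι ι ℝ)) = Real.exp r • 1 := by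
  rw [← Algebra.algebraMap_eq_smul_one, ← Algebra.algebraMap_eq_smul_one, Real.exp_eq_exp_ℝ]
  exact (NormedSpace.algebraMap_exp_comm r).symm

theorem exp_smul_mulVec_mem_of_add_smul_one {C : PointedCone ℝ (ι → ℝ)}
    (hC : IsClosed (C : Set (ι → ℝ))) {A : Matrix ι ι ℝ} (c : ℝ)
    (hA : ∀ v ∈ C, (A + c • 1) *ᵥ v ∈ C) {t : ℝ} (ht : 0 ≤ t) {v : ι → ℝ} (hv : v ∈ C) :
    NormedSpace.exp (t • A) *ᵥ v ∈ C := by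
  have hsplit : t • A = t • (A + c • 1) + (-(t * c)) • 1 := by
    rw [smul_add, smul_smul, add_assoc, ← add_smul, add_neg_cancel, zero_smul, add_zero]
  rw [hsplit, exp_add_of_commute _ _ ((Commute.one_right _).smul_right _), exp_smul_one,
    mul_smul_comm, mul_one, smul_mulVec]
  exact C.smul_mem (Real.exp_pos _).le (exp_smul_mulVec_mem hC hA ht hv)

theorem exp_smul_apply_nonneg {A : Matrix ι ι ℝ} (hA : ∀ i j, i ≠ j → 0 ≤ A i j) {t : ℝ}
    (ht : 0 ≤ t) (i j : ι) : 0 ≤ NormedSpace.exp (t • A) i j := by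
  have hshift : ∀ v ∈ PointedCone.positive ℝ (ι → ℝ),
      (A + (∑ k, |A k k|) • 1) *ᵥ v ∈ PointedCone.positive ℝ (ι → ℝ) := by
    intro v hv k
    refine Finset.sum_nonneg fun l _ => mul_nonneg ?_ (hv l)
    rcases eq_or_ne k l with rfl | hkl
    · have hsum := Finset.single_le_sum (fun l _ => abs_nonneg (A l l)) (Finset.mem_univ k)
      simp only [add_apply, smul_apply, one_apply_eq, smul_eq_mul, mul_one]
      linarith [neg_abs_le (A k k)]
    · simpa [hkl] using hA k l hkl
  have hcol := exp_smul_mulVec_mem_of_add_smul_one (isClosed_Ici (a := (0 : ι → ℝ))) _ hshift ht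
    (v := Pi.single j 1) (Pi.single_nonneg.2 zero_le_one)
  simpa using hcol i

end Matrix

namespace East

noncomputable section

open scoped Matrix

variable {L : ℕ}

-- The instance used in `surv`.
instance (B : Set (Cfg L)) : Fintype {σ : Cfg L // σ ∉ B} := Fintype.ofFinite _

def lastSiteSet (L : ℕ) (b : Bool) : Set (Cfg L) :=
  {σ | ∀ x : Fin L, x.val + 1 = L → σ x = b}

def onesExceptLast (L : ℕ) (c : Bool) : Cfg L := fun x => if x.val + 1 = L then c else true

lemma onesExceptLast_notMem (hL : 1 ≤ L) (b : Bool) :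
    onesExceptLast L (!b) ∉ lastSiteSet L b := fun h => by
  have h' := h ⟨L - 1, by omega⟩ (by simp only; omega)
  simp [onesExceptLast, Nat.sub_add_cancel hL] at h'

lemma eq_not_of_notMem_lastSiteSet {b : Bool} {σ : Cfg L} (hσ : σ ∉ lastSiteSet L b)
    {x : Fin L} (hx : x.val + 1 = L) : σ x = !b := by
  simp only [lastSiteSet, Set.mem_ofPred_eq, not_forall] at hσ
  obtain ⟨y, hy, hσy⟩ := hσ
  obtain rfl : y = x := Fin.ext (by omega)
  cases b <;> simpa using hσy

lemma flip_mem_lastSiteSet {b : Bool} {σ : Cfg L} (hσ : σ ∉ lastSiteSet L b) {x : Fin L}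
    (hx : x.val + 1 = L) : flip L σ x ∈ lastSiteSet L b := by
  intro y hy
  obtain rfl : y = x := Fin.ext (by omega)
  simp [flip, eq_not_of_notMem_lastSiteSet hσ hx]

lemma update_mem_lastSiteSet_iff {b s : Bool} {σ : Cfg L} {k : Fin L} (hk : k.val + 1 < L) :
    Function.update σ k s ∈ lastSiteSet L b ↔ σ ∈ lastSiteSet L b := by
  refine forall_congr' fun x => imp_congr_right fun hx => ?_
  rw [Function.update_of_ne (by rintro rfl; omega)]

lemma sum_K_mul (q : ℝ) (σ : Cfg L) (w : Cfg L → ℝ) :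
    ∑ τ, K L q σ τ * w τ = ∑ x, rate L q σ x * (w (flip L σ x) - w σ) := by
  simp only [K, sub_mul, Finset.sum_sub_distrib, Finset.sum_mul, ite_mul, zero_mul,
    Finset.sum_ite_eq', Finset.mem_univ, if_true, mul_sub]
  rw [Finset.sum_comm]
  simp [Finset.sum_ite_eq']

lemma rate_nonneg {q : ℝ} (hq0 : 0 ≤ q) (hq1 : q ≤ 1) (σ : Cfg L) (x : Fin L) :
    0 ≤ rate L q σ x := by
  unfold rate cR
  split_ifs <;> linarith

lemma rate_le_one {q : ℝ} (hq0 : 0 ≤ q) (hq1 : q ≤ 1) (σ : Cfg L) (x : Fin L) :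
    rate L q σ x ≤ 1 := by
  unfold rate cR
  split_ifs <;> linarith

lemma K_nonneg_of_ne {q : ℝ} (hq0 : 0 ≤ q) (hq1 : q ≤ 1) {σ τ : Cfg L} (h : σ ≠ τ) :
    0 ≤ K L q σ τ := by
  rw [K, if_neg (Ne.symm h), sub_zero]
  exact Finset.sum_nonneg fun x _ => by split_ifs <;> simp [rate_nonneg hq0 hq1]

open Classical in
def extendZero (B : Set (Cfg L)) (u : {σ : Cfg L // σ ∉ B} → ℝ) (σ : Cfg L) : ℝ :=
  if h : σ ∈ B then 0 else u ⟨σ, h⟩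

lemma extendZero_of_mem {B : Set (Cfg L)} (u : {σ : Cfg L // σ ∉ B} → ℝ) {σ : Cfg L}
    (h : σ ∈ B) : extendZero B u σ = 0 := dif_pos h

lemma extendZero_of_notMem {B : Set (Cfg L)} (u : {σ : Cfg L // σ ∉ B} → ℝ) {σ : Cfg L}
    (h : σ ∉ B) : extendZero B u σ = u ⟨σ, h⟩ := dif_neg h

lemma extendZero_add {B : Set (Cfg L)} (u w : {σ : Cfg L // σ ∉ B} → ℝ) (σ : Cfg L) :
    extendZero B (u + w) σ = extendZero B u σ + extendZero B w σ := by
  unfold extendZero; split_ifs <;> simp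

lemma extendZero_smul {B : Set (Cfg L)} (c : ℝ) (u : {σ : Cfg L // σ ∉ B} → ℝ)
    (σ : Cfg L) : extendZero B (c • u) σ = c • extendZero B u σ := by
  unfold extendZero; split_ifs <;> simp

lemma Ksub_mulVec_apply (q : ℝ) {B : Set (Cfg L)} (u : {σ : Cfg L // σ ∉ B} → ℝ)
    (a : {σ : Cfg L // σ ∉ B}) :
    (Ksub L q B *ᵥ u) a =
      ∑ x, rate L q a x * (extendZero B u (flip L a x) - extendZero B u a) := by
  rw [← sum_K_mul]
  exact Fintype.sum_of_injective Subtype.val Subtype.val_injective _ _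
    (fun τ hτ => by rw [extendZero_of_mem u (by simpa using hτ), mul_zero])
    (fun b => by unfold Ksub; rw [extendZero_of_notMem u b.2])

def siteStep (q : ℝ) (v : Cfg L → ℝ) (σ : Cfg L) (x : Fin L) : ℝ :=
  rate L q σ x * v (flip L σ x) + (1 - rate L q σ x) * v σ

lemma Ksub_add_smul_one_mulVec_apply (q : ℝ) {B : Set (Cfg L)}
    (u : {σ : Cfg L // σ ∉ B} → ℝ) (a : {σ : Cfg L // σ ∉ B}) :
    ((Ksub L q B + (L : ℝ) • 1) *ᵥ u) a = ∑ x, siteStep q (extendZero B u) a x := by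
  rw [Matrix.add_mulVec, Matrix.smul_mulVec, Matrix.one_mulVec, Pi.add_apply,
    Ksub_mulVec_apply, Pi.smul_apply, smul_eq_mul, ← extendZero_of_notMem u a.2]
  have hL : (L : ℝ) * extendZero B u a = ∑ _x : Fin L, extendZero B u a := by simp
  rw [hL, ← Finset.sum_add_distrib]
  exact Finset.sum_congr rfl fun x _ => by rw [siteStep]; ring

def IsRightmostInteriorVacancy (σ : Cfg L) (k : Fin L) : Prop :=
  k.val + 1 < L ∧ σ k = false ∧ ∀ j : Fin L, k.val < j.val → j.val + 1 < L → σ j = true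

def FillMonotone (v : Cfg L → ℝ) : Prop :=
  ∀ σ k, IsRightmostInteriorVacancy σ k → v σ ≤ v (Function.update σ k true)

lemma cR_update_of_ne {x k : Fin L} (h : x.val ≠ k.val + 1) (σ : Cfg L) (s : Bool) :
    cR L (Function.update σ k s) x = cR L σ x := by
  unfold cR
  by_cases h0 : x.val = 0
  · simp [h0]
  · rw [if_neg h0, if_neg h0, Function.update_of_ne (by simp only [Ne, Fin.ext_iff]; omega)]

lemma cR_eq_zero {σ : Cfg L} {x : Fin L} (h0 : x.val ≠ 0)
    (h : σ ⟨x.val - 1, lt_of_le_of_lt (Nat.sub_le _ _) x.isLt⟩ = true) : cR L σ x = 0 := by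
  simp [cR, h0, h]

lemma rate_update_of_lt (q : ℝ) {x k : Fin L} (h : x < k) (σ : Cfg L) (s : Bool) :
    rate L q (Function.update σ k s) x = rate L q σ x := by
  rw [rate, rate, cR_update_of_ne (by omega), Function.update_of_ne h.ne]

lemma rate_update_self (q : ℝ) (k : Fin L) (σ : Cfg L) (s : Bool) :
    rate L q (Function.update σ k s) k = cR L σ k * (if s then q else 1 - q) := by
  rw [rate, cR_update_of_ne (by omega), Function.update_self]

lemma siteStep_nonneg {q : ℝ} (hq0 : 0 ≤ q) (hq1 : q ≤ 1) {v : Cfg L → ℝ} (hv : 0 ≤ v)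
    (σ : Cfg L) (x : Fin L) : 0 ≤ siteStep q v σ x :=
  add_nonneg (mul_nonneg (rate_nonneg hq0 hq1 σ x) (hv _))
    (mul_nonneg (sub_nonneg.2 (rate_le_one hq0 hq1 σ x)) (hv _))

lemma siteStep_le_siteStep {q : ℝ} (hq0 : 0 ≤ q) (hq1 : q ≤ 1) {v : Cfg L → ℝ} {σ τ : Cfg L}
    {x : Fin L} (hr : rate L q σ x = rate L q τ x) (hflip : v (flip L σ x) ≤ v (flip L τ x))
    (hv : v σ ≤ v τ) : siteStep q v σ x ≤ siteStep q v τ x := by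
  rw [siteStep, siteStep, hr]
  have := rate_le_one hq0 hq1 τ x
  gcongr
  exact rate_nonneg hq0 hq1 τ x

lemma siteStep_le_self {q : ℝ} (hq0 : 0 ≤ q) (hq1 : q ≤ 1) {v : Cfg L → ℝ} {σ : Cfg L}
    {x : Fin L} (hflip : v (flip L σ x) ≤ v σ) : siteStep q v σ x ≤ v σ := by
  have := rate_nonneg hq0 hq1 σ x
  have := rate_le_one hq0 hq1 σ x
  rw [siteStep]
  nlinarith

lemma IsRightmostInteriorVacancy.flip_of_lt {σ : Cfg L} {k x : Fin L}
    (hk : IsRightmostInteriorVacancy σ k) (hx : x < k) :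
    IsRightmostInteriorVacancy (flip L σ x) k := by
  obtain ⟨hkL, hσk, hright⟩ := hk
  refine ⟨hkL, by rwa [flip, Function.update_of_ne hx.ne'], fun j hkj hjL => ?_⟩
  rw [flip, Function.update_of_ne (hx.trans (Fin.lt_def.2 hkj)).ne']
  exact hright j hkj hjL

lemma siteStep_update_of_lt {q : ℝ} (hq0 : 0 ≤ q) (hq1 : q ≤ 1) {v : Cfg L → ℝ}
    (hv : FillMonotone v) {σ : Cfg L} {k x : Fin L} (hk : IsRightmostInteriorVacancy σ k)
    (hx : x < k) : siteStep q v σ x ≤ siteStep q v (Function.update σ k true) x := by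
  have hflip : flip L (Function.update σ k true) x = Function.update (flip L σ x) k true := by
    rw [flip, flip, Function.update_of_ne hx.ne, Function.update_comm hx.ne']
  refine siteStep_le_siteStep hq0 hq1 (rate_update_of_lt q hx σ true).symm ?_ (hv σ k hk)
  rw [hflip]
  exact hv _ _ (hk.flip_of_lt hx)

lemma siteStep_update_self {q : ℝ} {v : Cfg L → ℝ} (hv : FillMonotone v) {σ : Cfg L}
    {k : Fin L} (hk : IsRightmostInteriorVacancy σ k) :
    siteStep q v σ k ≤ siteStep q v (Function.update σ k true) k := by
  have hσk := hk.2.1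
  have hσ : Function.update σ k false = σ := by
    rw [← hσk, Function.update_eq_self]
  have hrate : rate L q σ k = cR L σ k * (1 - q) := by
    conv_lhs => rw [← hσ]
    rw [rate_update_self, if_neg Bool.false_ne_true]
  have hflip : flip L (Function.update σ k true) k = σ := by
    rw [flip, Function.update_self, Function.update_idem, Bool.not_true, hσ]
  have hflip' : flip L σ k = Function.update σ k true := by rw [flip, hσk, Bool.not_false]
  have hc : cR L σ k ≤ 1 := by unfold cR; split_ifs <;> norm_num
  have hmono := hv σ k hk
  -- the two sides differ by `(1 - cR L σ k) * (v σ' - v σ)` with `σ' = Function.update σ k true`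
  rw [siteStep, siteStep, hrate, rate_update_self, if_pos rfl, hflip, hflip']
  nlinarith [mul_nonneg (sub_nonneg.2 hc) (sub_nonneg.2 hmono)]

lemma siteStep_update_of_gt {q : ℝ} (hq0 : 0 ≤ q) (hq1 : q ≤ 1) {b : Bool} {v : Cfg L → ℝ}
    (hv0 : 0 ≤ v) (hvB : ∀ τ ∈ lastSiteSet L b, v τ = 0) (hv : FillMonotone v) {σ : Cfg L}
    (hσ : σ ∉ lastSiteSet L b) {k x : Fin L} (hk : IsRightmostInteriorVacancy σ k)
    (hx : k < x) : siteStep q v σ x ≤ siteStep q v (Function.update σ k true) x := by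
  obtain ⟨hkL, hσk, hright⟩ := hk
  have hflip : v (flip L σ x) ≤ v σ := by
    by_cases hxL : x.val + 1 < L
    · have hσx : σ x = true := hright x hx hxL
      have hrv : IsRightmostInteriorVacancy (flip L σ x) x :=
        ⟨hxL, by simp [flip, hσx], fun j hxj hjL => by
          rw [flip, Function.update_of_ne (Fin.lt_def.2 hxj).ne']
          exact hright j (hx.trans (Fin.lt_def.2 hxj)) hjL⟩
      have hback : Function.update (flip L σ x) x true = σ := by
        rw [flip, Function.update_idem, ← hσx, Function.update_eq_self]
      simpa [hback] using hv _ _ hrv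
    · rw [hvB _ (flip_mem_lastSiteSet hσ (by omega))]
      exact hv0 σ
  have hrate : rate L q (Function.update σ k true) x = 0 := by
    rw [rate, cR_eq_zero (by omega), zero_mul]
    by_cases hxk : x.val - 1 = k.val
    · rw [show (⟨x.val - 1, _⟩ : Fin L) = k from Fin.ext hxk, Function.update_self]
    · rw [Function.update_of_ne (by simp only [Ne, Fin.ext_iff]; omega)]
      exact hright _ (show k.val < x.val - 1 by simp only [Fin.lt_def] at hx; omega)
        (show x.val - 1 + 1 < L by omega)
  calc siteStep q v σ x ≤ v σ := siteStep_le_self hq0 hq1 hflip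
    _ ≤ v (Function.update σ k true) := hv σ k ⟨hkL, hσk, hright⟩
    _ = siteStep q v (Function.update σ k true) x := by simp [siteStep, hrate]

lemma sum_siteStep_update_le {q : ℝ} (hq0 : 0 ≤ q) (hq1 : q ≤ 1) {b : Bool} {v : Cfg L → ℝ}
    (hv0 : 0 ≤ v) (hvB : ∀ τ ∈ lastSiteSet L b, v τ = 0) (hv : FillMonotone v) {σ : Cfg L}
    (hσ : σ ∉ lastSiteSet L b) {k : Fin L} (hk : IsRightmostInteriorVacancy σ k) :
    ∑ x, siteStep q v σ x ≤ ∑ x, siteStep q v (Function.update σ k true) x := by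
  refine Finset.sum_le_sum fun x _ => ?_
  rcases lt_trichotomy x k with hx | rfl | hx
  · exact siteStep_update_of_lt hq0 hq1 hv hk hx
  · exact siteStep_update_self hv hk
  · exact siteStep_update_of_gt hq0 hq1 hv0 hvB hv hσ hk hx

def fillCone (B : Set (Cfg L)) : PointedCone ℝ ({σ : Cfg L // σ ∉ B} → ℝ) where
  carrier := {u | 0 ≤ u ∧ FillMonotone (extendZero B u)}
  add_mem' := by
    rintro u w ⟨hu0, hu⟩ ⟨hw0, hw⟩
    refine ⟨add_nonneg hu0 hw0, fun σ k hk => ?_⟩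
    simpa only [extendZero_add] using add_le_add (hu σ k hk) (hw σ k hk)
  zero_mem' := ⟨le_rfl, fun σ k _ => by simp [extendZero]⟩
  smul_mem' := by
    rintro c u ⟨hu0, hu⟩
    refine ⟨smul_nonneg c.2 hu0, fun σ k hk => ?_⟩
    change extendZero B ((c : ℝ) • u) σ ≤ extendZero B ((c : ℝ) • u) _
    simpa only [extendZero_smul] using smul_le_smul_of_nonneg_left (hu σ k hk) c.2

lemma isClosed_fillCone (B : Set (Cfg L)) :
    IsClosed (fillCone B : Set ({σ : Cfg L // σ ∉ B} → ℝ)) := by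
  have hext (σ : Cfg L) : Continuous fun u : {σ : Cfg L // σ ∉ B} → ℝ => extendZero B u σ := by
    unfold extendZero
    split_ifs
    exacts [continuous_const, continuous_apply _]
  have hset : (fillCone B : Set ({σ : Cfg L // σ ∉ B} → ℝ)) = Set.Ici 0 ∩
      ⋂ σ, ⋂ k, ⋂ (_ : IsRightmostInteriorVacancy σ k),
        {u | extendZero B u σ ≤ extendZero B u (Function.update σ k true)} := by
    ext u
    simp [fillCone, FillMonotone]
  rw [hset]
  exact isClosed_Ici.inter (isClosed_iInter fun σ => isClosed_iInter fun k =>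
    isClosed_iInter fun _ => isClosed_le (hext σ) (hext _))

lemma one_mem_fillCone (b : Bool) : (1 : {σ : Cfg L // σ ∉ lastSiteSet L b} → ℝ) ∈
    fillCone (lastSiteSet L b) := by
  refine ⟨zero_le_one, fun σ k hk => ?_⟩
  by_cases hσ : σ ∈ lastSiteSet L b
  · rw [extendZero_of_mem _ hσ, extendZero_of_mem _ ((update_mem_lastSiteSet_iff hk.1).2 hσ)]
  · rw [extendZero_of_notMem _ hσ,
      extendZero_of_notMem _ (mt (update_mem_lastSiteSet_iff hk.1).1 hσ)]
    exact le_rfl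

lemma mulVec_mem_fillCone {q : ℝ} (hq0 : 0 ≤ q) (hq1 : q ≤ 1) {b : Bool}
    {u : {σ : Cfg L // σ ∉ lastSiteSet L b} → ℝ} (hu : u ∈ fillCone (lastSiteSet L b)) :
    (Ksub L q (lastSiteSet L b) + (L : ℝ) • 1) *ᵥ u ∈ fillCone (lastSiteSet L b) := by
  obtain ⟨hu0, hu⟩ := hu
  have hv0 : 0 ≤ extendZero _ u := fun σ => by
    unfold extendZero
    split_ifs
    exacts [le_rfl, hu0 _]
  refine ⟨fun a => ?_, fun σ k hk => ?_⟩
  · rw [Pi.zero_apply, Ksub_add_smul_one_mulVec_apply]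
    exact Finset.sum_nonneg fun x _ => siteStep_nonneg hq0 hq1 hv0 a x
  · by_cases hσ : σ ∈ lastSiteSet L b
    · rw [extendZero_of_mem _ hσ, extendZero_of_mem _ ((update_mem_lastSiteSet_iff hk.1).2 hσ)]
    · have hσ' := mt (update_mem_lastSiteSet_iff (s := true) hk.1).1 hσ
      rw [extendZero_of_notMem _ hσ, extendZero_of_notMem _ hσ', Ksub_add_smul_one_mulVec_apply,
        Ksub_add_smul_one_mulVec_apply]
      exact sum_siteStep_update_le hq0 hq1 hv0 (fun τ hτ => extendZero_of_mem u hτ) hu hσ hk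

lemma FillMonotone.le_onesExceptLast {v : Cfg L → ℝ} (hv : FillMonotone v) {c : Bool}
    {σ : Cfg L} (hσ : ∀ x : Fin L, x.val + 1 = L → σ x = c) :
    v σ ≤ v (onesExceptLast L c) := by
  suffices h : ∀ m : ℕ, ∀ σ : Cfg L, (∀ x : Fin L, x.val + 1 = L → σ x = c) →
      (∀ j : Fin L, m ≤ j.val → j.val + 1 < L → σ j = true) → v σ ≤ v (onesExceptLast L c) from
    h L σ hσ fun j hj _ => absurd j.isLt (by omega)
  intro m
  induction m with
  | zero =>
    intro σ hlast hint
    refine le_of_eq (congrArg v (funext fun x => ?_))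
    by_cases hx : x.val + 1 = L
    · simp [onesExceptLast, hx, hlast x hx]
    · simp [onesExceptLast, hx, hint x (Nat.zero_le _) (by omega)]
  | succ m ih =>
    intro σ hlast hint
    by_cases hm : ∃ k : Fin L, k.val = m ∧ k.val + 1 < L ∧ σ k = false
    · obtain ⟨k, rfl, hkL, hσk⟩ := hm
      refine (hv σ k ⟨hkL, hσk, fun j hj hjL => hint j hj hjL⟩).trans (ih _ (fun x hx => ?_) ?_)
      · rw [Function.update_of_ne (by rintro rfl; omega)]
        exact hlast x hx
      · intro j hj hjL
        by_cases hjk : j = k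
        · rw [hjk, Function.update_self]
        · rw [Function.update_of_ne hjk]
          exact hint j (by have := Fin.val_ne_of_ne hjk; omega) hjL
    · refine ih σ hlast fun j hj hjL => ?_
      rcases hj.eq_or_lt with hjm | hjm
      · by_contra h
        exact hm ⟨j, hjm.symm, hjL, by simpa using h⟩
      · exact hint j hjm hjL

lemma le_of_mem_fillCone (hL : 1 ≤ L) {b : Bool} {u : {σ : Cfg L // σ ∉ lastSiteSet L b} → ℝ}
    (hu : u ∈ fillCone (lastSiteSet L b)) (a : {σ : Cfg L // σ ∉ lastSiteSet L b}) :
    u a ≤ u ⟨onesExceptLast L (!b), onesExceptLast_notMem hL b⟩ := by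
  have h := hu.2.le_onesExceptLast fun x hx => eq_not_of_notMem_lastSiteSet a.2 hx
  rwa [extendZero_of_notMem _ a.2, extendZero_of_notMem _ (onesExceptLast_notMem hL b)] at h

lemma surv_eq_mulVec_one (q : ℝ) {B : Set (Cfg L)} {η : Cfg L} (hη : η ∉ B) (t : ℝ) :
    surv L q B η t = (NormedSpace.exp (t • Ksub L q B) *ᵥ 1) ⟨η, hη⟩ := by
  refine (Fintype.sum_eq_single ⟨η, hη⟩ fun a ha => ?_).trans ?_
  · exact Finset.sum_eq_zero fun b _ => if_neg fun h => ha (Subtype.ext h)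
  · simp [Matrix.mulVec, dotProduct]

lemma exp_Ksub_mulVec_one_le (hL : 1 ≤ L) {q : ℝ} (hq0 : 0 ≤ q) (hq1 : q ≤ 1) (b : Bool)
    {s : ℝ} (hs : 0 ≤ s) (a : {σ : Cfg L // σ ∉ lastSiteSet L b}) :
    (NormedSpace.exp (s • Ksub L q (lastSiteSet L b)) *ᵥ 1) a ≤
      (NormedSpace.exp (s • Ksub L q (lastSiteSet L b)) *ᵥ 1)
        ⟨onesExceptLast L (!b), onesExceptLast_notMem hL b⟩ :=
  le_of_mem_fillCone hL (Matrix.exp_smul_mulVec_mem_of_add_smul_one (isClosed_fillCone _) L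
    (fun _ hv => mulVec_mem_fillCone hq0 hq1 hv) hs (one_mem_fillCone b)) a

lemma surv_add_le (hL : 1 ≤ L) {q : ℝ} (hq0 : 0 ≤ q) (hq1 : q ≤ 1) (b : Bool) {s t : ℝ}
    (hs : 0 ≤ s) (ht : 0 ≤ t) :
    surv L q (lastSiteSet L b) (onesExceptLast L (!b)) (t + s) ≤
      surv L q (lastSiteSet L b) (onesExceptLast L (!b)) t *
        surv L q (lastSiteSet L b) (onesExceptLast L (!b)) s := by
  simp only [surv_eq_mulVec_one q (onesExceptLast_notMem hL b), add_smul,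
    Matrix.exp_add_of_commute _ _ (((Commute.refl _).smul_left t).smul_right s)]
  exact Matrix.mul_mulVec_apply_le (Matrix.exp_smul_apply_nonneg
    (fun _ _ h => K_nonneg_of_ne hq0 hq1 (Subtype.coe_injective.ne h)) ht)
    (exp_Ksub_mulVec_one_le hL hq0 hq1 b hs)

/-- sub-multiplicativity of the survival functions.
For the East model on `{1,…,L}`: for all `s,t ≥ 0`,
`P_{𝟙0}(τ_L > t+s) ≤ P_{𝟙0}(τ_L > t)·P_{𝟙0}(τ_L > s)` and
`P_𝟙(τ̂_L > t+s) ≤ P_𝟙(τ̂_L > t)·P_𝟙(τ̂_L > s)`. -/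
theorem survival_submultiplicative
    (L : ℕ) (hL : 1 ≤ L) (q : ℝ) (hq0 : 0 < q) (hq : q < 1 / 2) :
    (∀ s t : ℝ, 0 ≤ s → 0 ≤ t →
      surv L q (lastOneSet L) (oneZero L) (t + s) ≤
        surv L q (lastOneSet L) (oneZero L) t *
          surv L q (lastOneSet L) (oneZero L) s) ∧
    (∀ s t : ℝ, 0 ≤ s → 0 ≤ t →
      surv L q (lastZeroSet L) (allOnes L) (t + s) ≤
        surv L q (lastZeroSet L) (allOnes L) t *
          surv L q (lastZeroSet L) (allOnes L) s) := by
  have hq1 : q ≤ 1 := by linarith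
  have hoz : oneZero L = onesExceptLast L (!true) := by
    funext x
    by_cases hx : x.val + 1 = L <;> simp [oneZero, onesExceptLast, hx]
  have hall : allOnes L = onesExceptLast L (!false) := by
    funext x
    by_cases hx : x.val + 1 = L <;> simp [allOnes, onesExceptLast, hx]
  rw [hoz, hall]
  exact ⟨fun s t hs ht => surv_add_le hL hq0.le hq1 true hs ht,
    fun s t hs ht => surv_add_le hL hq0.le hq1 false hs ht⟩

end

end East
end

section
/- Let τ be a positive random variable on a probability space such that the map t ↦ P(τ ≥ t) is continuous and the tail function is sub-multiplicative, i.e. P(τ > t+s) ≤ P(τ > t)·P(τ > s) for all s,t ≥ 0. Then for every t > 0 one has P(τ < t)·E[τ] ≤ e·t, as an inequality in [0,∞] (E[τ] may be infinite; in that case P(τ < t) = 0). -/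
open Filter Topology MeasureTheory

namespace East

noncomputable section

/-! Submultiplicativity makes the tail geometric along multiples of `t`:
`P(τ > n t) ≤ P(τ > t)^n`. Summing the layers of height `t`,
`E[τ] ≤ t · Σₙ P(τ > n t) ≤ t / (1 - P(τ > t))`, and `1 - P(τ > t) ≥ P(τ < t)`. -/

section TailBound

variable {Ω : Type*} [MeasurableSpace Ω] {μ : Measure Ω} {τ : Ω → ℝ} {t : ℝ}

theorem measure_nat_mul_lt_le_pow [IsProbabilityMeasure μ] (ht : 0 ≤ t)
    (hsub : ∀ s, 0 ≤ s → μ {ω | s + t < τ ω} ≤ μ {ω | s < τ ω} * μ {ω | t < τ ω}) (n : ℕ) :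
    μ {ω | n * t < τ ω} ≤ μ {ω | t < τ ω} ^ n := by
  induction n with
  | zero => simpa using prob_le_one
  | succ n ih =>
    calc μ {ω | ((n + 1 : ℕ) : ℝ) * t < τ ω}
        = μ {ω | n * t + t < τ ω} := by push_cast; simp only [add_mul, one_mul]
      _ ≤ μ {ω | n * t < τ ω} * μ {ω | t < τ ω} := hsub _ (by positivity)
      _ ≤ μ {ω | t < τ ω} ^ n * μ {ω | t < τ ω} := by gcongr
      _ = μ {ω | t < τ ω} ^ (n + 1) := (pow_succ _ n).symm

theorem ofReal_le_tsum_ite_nat_mul_lt (x : ℝ) (ht : 0 < t) :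
    ENNReal.ofReal x ≤ ∑' n : ℕ, if (n : ℝ) * t < x then ENNReal.ofReal t else 0 := by
  set N := ⌈x / t⌉₊
  have hlayer : ∀ n ∈ Finset.range N, (if (n : ℝ) * t < x then ENNReal.ofReal t else 0)
      = ENNReal.ofReal t := fun n hn => by
    rw [if_pos ((lt_div_iff₀ ht).mp (Nat.lt_ceil.mp (Finset.mem_range.mp hn)))]
  calc ENNReal.ofReal x ≤ ENNReal.ofReal (N * t) :=
        ENNReal.ofReal_le_ofReal ((div_le_iff₀ ht).mp (Nat.le_ceil _))
    _ = ∑ n ∈ Finset.range N, ENNReal.ofReal t := by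
        rw [Finset.sum_const, Finset.card_range, nsmul_eq_mul,
          ENNReal.ofReal_mul (Nat.cast_nonneg _), ENNReal.ofReal_natCast]
    _ = ∑ n ∈ Finset.range N, if (n : ℝ) * t < x then ENNReal.ofReal t else 0 :=
        (Finset.sum_congr rfl hlayer).symm
    _ ≤ _ := ENNReal.sum_le_tsum _

theorem lintegral_ofReal_le_mul_tsum_measure_nat_mul_lt (hτ : Measurable τ) (ht : 0 < t) :
    ∫⁻ ω, ENNReal.ofReal (τ ω) ∂μ ≤ ENNReal.ofReal t * ∑' n : ℕ, μ {ω | n * t < τ ω} := by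
  have hmeas : ∀ n : ℕ, MeasurableSet {ω | n * t < τ ω} := fun _ =>
    measurableSet_lt measurable_const hτ
  calc ∫⁻ ω, ENNReal.ofReal (τ ω) ∂μ
      ≤ ∫⁻ ω, ∑' n : ℕ, {ω | n * t < τ ω}.indicator (fun _ => ENNReal.ofReal t) ω ∂μ := by
        refine lintegral_mono fun ω => ?_
        simpa only [Set.indicator_apply, Set.mem_ofPred_eq]
          using ofReal_le_tsum_ite_nat_mul_lt (τ ω) ht
    _ = ∑' n : ℕ, ENNReal.ofReal t * μ {ω | n * t < τ ω} := by
        rw [lintegral_tsum fun n => (measurable_const.indicator (hmeas n)).aemeasurable]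
        simp only [lintegral_indicator_const (hmeas _)]
    _ = ENNReal.ofReal t * ∑' n : ℕ, μ {ω | n * t < τ ω} := ENNReal.tsum_mul_left

theorem measure_lt_mul_lintegral_ofReal_le [IsProbabilityMeasure μ] (hτ : Measurable τ)
    (ht : 0 < t)
    (hsub : ∀ s, 0 ≤ s → μ {ω | s + t < τ ω} ≤ μ {ω | s < τ ω} * μ {ω | t < τ ω}) :
    μ {ω | τ ω < t} * ∫⁻ ω, ENNReal.ofReal (τ ω) ∂μ ≤ ENNReal.ofReal t := by
  set g := μ {ω | t < τ ω}
  have hbelow : μ {ω | τ ω < t} ≤ 1 - g := by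
    rw [← prob_compl_eq_one_sub (measurableSet_lt measurable_const hτ)]
    exact measure_mono fun ω (hω : τ ω < t) (h : t < τ ω) => (hω.trans h).false
  have hmean : ∫⁻ ω, ENNReal.ofReal (τ ω) ∂μ ≤ ENNReal.ofReal t * (1 - g)⁻¹ :=
    calc ∫⁻ ω, ENNReal.ofReal (τ ω) ∂μ
        ≤ ENNReal.ofReal t * ∑' n : ℕ, μ {ω | n * t < τ ω} :=
          lintegral_ofReal_le_mul_tsum_measure_nat_mul_lt hτ ht
      _ ≤ ENNReal.ofReal t * ∑' n : ℕ, g ^ n := by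
          gcongr with n; exact measure_nat_mul_lt_le_pow ht.le hsub n
      _ = ENNReal.ofReal t * (1 - g)⁻¹ := by rw [ENNReal.tsum_geometric]
  calc μ {ω | τ ω < t} * ∫⁻ ω, ENNReal.ofReal (τ ω) ∂μ
      ≤ (1 - g) * (ENNReal.ofReal t * (1 - g)⁻¹) := mul_le_mul' hbelow hmean
    _ = ENNReal.ofReal t * ((1 - g) * (1 - g)⁻¹) := by ring
    _ ≤ ENNReal.ofReal t := mul_le_of_le_one_right' (ENNReal.mul_inv_le_one _)

end TailBound

theorem submultiplicative_tail_bound_general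
    {Ω : Type*} [MeasurableSpace Ω] (P : Measure Ω) [IsProbabilityMeasure P]
    (τ : Ω → ℝ) (hmeas : Measurable τ)
    (hsub : ∀ s t : ℝ, 0 ≤ s → 0 ≤ t →
      P {ω | t + s < τ ω} ≤ P {ω | t < τ ω} * P {ω | s < τ ω}) :
    ∀ t : ℝ, 0 < t →
      P {ω | τ ω < t} * ∫⁻ ω, ENNReal.ofReal (τ ω) ∂P ≤
        ENNReal.ofReal (Real.exp 1 * t) := fun t ht =>
  (measure_lt_mul_lintegral_ofReal_le hmeas ht fun s hs => hsub t s ht.le hs).trans <|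
    ENNReal.ofReal_le_ofReal (le_mul_of_one_le_left ht.le (by linarith [Real.add_one_le_exp 1]))

/-- tail estimate for sub-multiplicative survival functions.
If `τ > 0` is a random variable on a probability space with `t ↦ P(τ ≥ t)` continuous and
`P(τ > t+s) ≤ P(τ > t)·P(τ > s)` for all `s,t ≥ 0`, then for every `t > 0`,
`P(τ < t)·E[τ] ≤ e·t` (as an inequality in `[0,∞]`). -/
theorem submultiplicative_tail_bound
    {Ω : Type*} [MeasurableSpace Ω] (P : Measure Ω) [IsProbabilityMeasure P]
    (τ : Ω → ℝ) (hmeas : Measurable τ) (hpos : ∀ ω, 0 < τ ω)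
    (hcont : Continuous fun t : ℝ => (P {ω | t ≤ τ ω}).toReal)
    (hsub : ∀ s t : ℝ, 0 ≤ s → 0 ≤ t →
      P {ω | t + s < τ ω} ≤ P {ω | t < τ ω} * P {ω | s < τ ω}) :
    ∀ t : ℝ, 0 < t →
      P {ω | τ ω < t} * ∫⁻ ω, ENNReal.ofReal (τ ω) ∂P ≤
        ENNReal.ofReal (Real.exp 1 * t) :=
  submultiplicative_tail_bound_general P τ hmeas hsub

end

end East
end

section
/- Fix an integer r > 2 and define the integer sequence ℓ₁ = 3 and ℓ_i = 2ℓ_{i−1} − ⌈ℓ_{i−1}/r⌉ for 2 ≤ i ≤ r. Then for all i with 1 ≤ i ≤ r: 2^i·(1 − 1/r)^i ≤ ℓ_i ≤ 2^{i+1}. -/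
open Filter Topology MeasureTheory

namespace East

noncomputable section

/-! The recursion gives `ℓ_{i+1} ≤ 2ℓ_i` at once. For the lower bound put `a = 2(1 − 1/r) ≥ 1` and carry
the stronger invariant `a^i + 1 ≤ ℓ_i`: since `⌈ℓ/r⌉ < ℓ/r + 1`, one step gives
`ℓ_{i+1} > (2 − 1/r)ℓ_i − 1 ≥ a·a^i + 1 + (a^i − 1)/r`. -/

def bisectionStep (r ℓ : ℕ) : ℕ := 2 * ℓ - ⌈(ℓ : ℝ) / r⌉₊

lemma bisectionStep_le (r ℓ : ℕ) : bisectionStep r ℓ ≤ 2 * ℓ := Nat.sub_le _ _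

lemma two_sub_inv_mul_sub_one_lt_bisectionStep {r : ℕ} (hr : 0 < r) (ℓ : ℕ) :
    (2 - 1 / (r : ℝ)) * ℓ - 1 < bisectionStep r ℓ := by
  have hceil_le : ⌈(ℓ : ℝ) / r⌉₊ ≤ ℓ :=
    Nat.ceil_le.mpr (div_le_self (Nat.cast_nonneg _) (by exact_mod_cast hr))
  have hceil_lt : (⌈(ℓ : ℝ) / r⌉₊ : ℝ) < ℓ / r + 1 := Nat.ceil_lt_add_one (by positivity)
  rw [bisectionStep, Nat.cast_sub (by omega)]
  push_cast
  linarith [div_eq_mul_one_div (ℓ : ℝ) r]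

lemma mul_add_one_le_bisectionStep {r ℓ : ℕ} (hr : 0 < r) {x : ℝ} (hx : 1 ≤ x)
    (hℓ : x + 1 ≤ ℓ) : 2 * (1 - 1 / (r : ℝ)) * x + 1 ≤ bisectionStep r ℓ := by
  have hinv : 0 < 1 / (r : ℝ) := by positivity
  have hinv_le : 1 / (r : ℝ) ≤ 1 := by
    rw [div_le_one (by positivity)]; exact_mod_cast hr
  have hstep := two_sub_inv_mul_sub_one_lt_bisectionStep hr ℓ
  nlinarith [mul_le_mul_of_nonneg_left hℓ (by linarith : (0 : ℝ) ≤ 2 - 1 / r)]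

section Recursion

variable {r : ℕ} {ℓ : ℕ → ℕ} (hℓ1 : ℓ 1 = 3)
  (hrec : ∀ i, 1 ≤ i → i < r → ℓ (i + 1) = bisectionStep r (ℓ i))
include hℓ1 hrec

lemma le_two_pow_of_bisectionStep {i : ℕ} (hi : 1 ≤ i) (hir : i ≤ r) : ℓ i ≤ 2 ^ (i + 1) := by
  induction i, hi using Nat.le_induction with
  | base => omega
  | succ n hn ih =>
    rw [hrec n hn (by omega), pow_succ]
    linarith [bisectionStep_le r (ℓ n), ih (by omega)]

lemma pow_add_one_le_of_bisectionStep (hr : 2 ≤ r) {i : ℕ} (hi : 1 ≤ i) (hir : i ≤ r) :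
    (2 * (1 - 1 / (r : ℝ))) ^ i + 1 ≤ ℓ i := by
  have hbase : 1 ≤ 2 * (1 - 1 / (r : ℝ)) := by
    have : 1 / (r : ℝ) ≤ 1 / 2 := one_div_le_one_div_of_le two_pos (by exact_mod_cast hr)
    linarith
  induction i, hi using Nat.le_induction with
  | base =>
    rw [hℓ1, pow_one]
    have : 0 < 1 / (r : ℝ) := by positivity
    push_cast
    linarith
  | succ n hn ih =>
    rw [hrec n hn (by omega), pow_succ']
    exact mul_add_one_le_bisectionStep (by omega) (one_le_pow₀ hbase) (ih (by omega))

end Recursion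

/-- growth of the bisection length scales.
With `ℓ₁ = 3` and `ℓ_i = 2ℓ_{i−1} − ⌈ℓ_{i−1}/r⌉` for `2 ≤ i ≤ r` (where `r > 2`), one has
`2^i (1 − 1/r)^i ≤ ℓ_i ≤ 2^{i+1}` for all `1 ≤ i ≤ r`. -/
theorem bisection_length_bounds
    (r : ℕ) (hr : 2 < r) (ℓ : ℕ → ℕ) (hℓ1 : ℓ 1 = 3)
    (hrec : ∀ i : ℕ, 2 ≤ i → i ≤ r →
      ℓ i = 2 * ℓ (i - 1) - ⌈(ℓ (i - 1) : ℝ) / (r : ℝ)⌉₊) :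
    ∀ i : ℕ, 1 ≤ i → i ≤ r →
      (2 : ℝ) ^ i * (1 - 1 / (r : ℝ)) ^ i ≤ (ℓ i : ℝ) ∧ (ℓ i : ℝ) ≤ 2 ^ (i + 1) := by
  have hstep : ∀ i, 1 ≤ i → i < r → ℓ (i + 1) = bisectionStep r (ℓ i) := fun i hi hir =>
    hrec (i + 1) (by omega) hir
  intro i hi hir
  constructor
  · rw [← mul_pow]
    linarith [pow_add_one_le_of_bisectionStep hℓ1 hstep hr.le hi hir]
  · exact_mod_cast le_two_pow_of_bisectionStep hℓ1 hstep hi hir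

end

end East
end
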